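/- arXiv:1502.07714 — 2 statements merged into one kernel-verified Lean document; each statement's English description precedes it below -/
import Mathlib

section
/- Let G = (V,E) be a graph, c ∈ ℝ^E_+ a nonnegative cost function, and k > 0 such that every proper cut of G has cost at least k (i.e., c(δ(S)) ≥ k for all ∅ ≠ S ⊊ V). Suppose S ⊊ T are subsets of V with ∅ ≠ S, T ⊊ V, c(δ(S)) = c(δ(T)) = k, and some edge e belongs to both δ(S) and δ(T). If T ∖ S is a proper nonempty subset of V, then c(e) ≤ k/2. -/
open Classical

noncomputable section

/-- The cut `δ(S)`: edges of `G` with exactly one endpoint in `S`. -/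
def cutE {V : Type*} (G : SimpleGraph V) (S : Set V) : Set (Sym2 V) :=
  {e | e ∈ G.edgeSet ∧ ∃ u v, e = s(u, v) ∧ u ∈ S ∧ v ∉ S}

/-- Characteristic vector of an edge set. -/
def chi {V : Type*} (C : Set (Sym2 V)) : Sym2 V → ℝ := fun e => if e ∈ C then 1 else 0

/-- Total cost of an edge set. -/
def cost {V : Type*} [Fintype V] [DecidableEq V] (c : Sym2 V → ℝ) (C : Set (Sym2 V)) : ℝ :=
  ∑ e ∈ Finset.univ.filter (· ∈ C), c e

/-
If `S ⊆ T`, an edge crossing both `δ(S)` and `δ(T)` runs from `S` to `V ∖ T`, so it has no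
endpoint in `T ∖ S`; hence `δ(T ∖ S) ⊆ δ(S) ∆ δ(T)`, and for nonnegative costs
`c(δ(T ∖ S)) ≤ c(δ(S)) + c(δ(T)) - 2 c(δ(S) ∩ δ(T)) ≤ 2k - 2 c(e)`.
Since `T ∖ S` is a proper cut, `k ≤ c(δ(T ∖ S))`, which gives `c(e) ≤ k / 2`.
-/

section Cut

variable {V : Type*} (G : SimpleGraph V)

theorem mk_mem_cutE_iff {S : Set V} {u v : V} :
    s(u, v) ∈ cutE G S ↔ G.Adj u v ∧ (u ∈ S ↔ v ∉ S) := by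
  constructor
  · rintro ⟨hadj, a, b, hab, ha, hb⟩
    rcases Sym2.eq_iff.mp hab with ⟨rfl, rfl⟩ | ⟨rfl, rfl⟩ <;> exact ⟨hadj, by tauto⟩
  · rintro ⟨hadj, huv⟩
    refine ⟨hadj, ?_⟩
    by_cases hu : u ∈ S
    · exact ⟨u, v, rfl, hu, huv.mp hu⟩
    · exact ⟨v, u, Sym2.eq_swap, not_not.mp (mt huv.mpr hu), hu⟩

theorem cutE_sdiff_subset_symmDiff {S T : Set V} (hST : S ⊆ T) :
    cutE G (T \ S) ⊆ symmDiff (cutE G S) (cutE G T) := by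
  intro f
  induction f using Sym2.ind with
  | h u v =>
    have hu := @hST u
    have hv := @hST v
    simp only [mk_mem_cutE_iff, Set.mem_symmDiff, Set.mem_sdiff]
    tauto

end Cut

section Cost

variable {V : Type*} [Fintype V] [DecidableEq V] (c : Sym2 V → ℝ)

theorem cost_eq_sum_indicator (A : Set (Sym2 V)) : cost c A = ∑ e, A.indicator c e := by
  rw [cost, Finset.sum_filter]
  exact Finset.sum_congr rfl fun e _ => (Set.indicator_apply A c e).symm

theorem cost_symmDiff_add_two_mul_cost_inter (A B : Set (Sym2 V)) :
    cost c (symmDiff A B) + 2 * cost c (A ∩ B) = cost c A + cost c B := by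
  have hunion : ∑ e, (A ∪ B).indicator c e + ∑ e, (A ∩ B).indicator c e =
      ∑ e, A.indicator c e + ∑ e, B.indicator c e := by
    simp only [← Finset.sum_add_distrib, Set.indicator_union_add_inter_apply]
  simp only [cost_eq_sum_indicator]
  rw [symmDiff_eq_sup_sdiff_inf, Set.indicator_sdiff inf_le_sup]
  simp only [Pi.sub_apply, Finset.sum_sub_distrib, Set.sup_eq_union, Set.inf_eq_inter]
  linarith

variable {c}

theorem cost_mono (hc : ∀ e, 0 ≤ c e) {A B : Set (Sym2 V)} (h : A ⊆ B) :
    cost c A ≤ cost c B := by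
  simp only [cost_eq_sum_indicator]
  exact Finset.sum_le_sum fun e _ => Set.indicator_le_indicator_apply_of_subset h (hc e)

theorem le_cost_of_mem (hc : ∀ e, 0 ≤ c e) {A : Set (Sym2 V)} {e : Sym2 V} (he : e ∈ A) :
    c e ≤ cost c A := by
  rw [cost_eq_sum_indicator, ← Set.indicator_of_mem he c]
  exact Finset.single_le_sum (fun e _ => Set.indicator_nonneg (fun e _ => hc e) e)
    (Finset.mem_univ e)

end Cost

theorem stmt1_general {V : Type*} [Fintype V] [DecidableEq V] (G : SimpleGraph V)
    (c : Sym2 V → ℝ) (hc : ∀ e, 0 ≤ c e) (k : ℝ)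
    (hmin : ∀ S : Set V, S.Nonempty → S ≠ Set.univ → k ≤ cost c (cutE G S))
    (S T : Set V) (hST : S ⊂ T)
    (hcS : cost c (cutE G S) = k) (hcT : cost c (cutE G T) = k)
    (e : Sym2 V) (heS : e ∈ cutE G S) (heT : e ∈ cutE G T)
    (hTS : (T \ S).Nonempty) (hTSu : T \ S ≠ Set.univ) :
    c e ≤ k / 2 := by
  have hk_le : k ≤ cost c (cutE G (T \ S)) := hmin (T \ S) hTS hTSu
  have hdiff_le := cost_mono hc (cutE_sdiff_subset_symmDiff G hST.subset)
  have hsymm := cost_symmDiff_add_two_mul_cost_inter c (cutE G S) (cutE G T)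
  have he : c e ≤ cost c (cutE G S ∩ cutE G T) := le_cost_of_mem hc ⟨heS, heT⟩
  linarith

theorem stmt1 {V : Type*} [Fintype V] [DecidableEq V] (G : SimpleGraph V)
    (c : Sym2 V → ℝ) (hc : ∀ e, 0 ≤ c e) (k : ℝ) (hk : 0 < k)
    (hmin : ∀ S : Set V, S.Nonempty → S ≠ Set.univ → k ≤ cost c (cutE G S))
    (S T : Set V) (hST : S ⊂ T) (hS : S.Nonempty) (hT : T ≠ Set.univ)
    (hcS : cost c (cutE G S) = k) (hcT : cost c (cutE G T) = k)
    (e : Sym2 V) (heS : e ∈ cutE G S) (heT : e ∈ cutE G T)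
    (hTS : (T \ S).Nonempty) (hTSu : T \ S ≠ Set.univ) :
    c e ≤ k / 2 :=
  stmt1_general G c hc k hmin S T hST hcS hcT e heS heT hTS hTSu

end
end

section
/- For the prism graph with the cost function c assigning 1 to triangle edges and 2 to matching edges, the nine characteristic vectors χ^{δ(S)} for S ∈ F = {{a},{b},{c},{a'},{b'},{c'},{a,a'},{b,b'},{c,c'}} are linearly independent in ℝ^E (where E is the 9-element edge set of the prism), and each δ(S), S ∈ F, is a minimum cut of cost 4. -/
open Classical

noncomputable section

/-- The prism: two triangles `{0,1,2}` and `{3,4,5}` joined by the perfect matching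
`0-3`, `1-4`, `2-5` (the complement of the 6-cycle). -/
def prism : SimpleGraph (Fin 6) where
  Adj a b := a ≠ b ∧
    ((a.val < 3 ∧ b.val < 3) ∨ (3 ≤ a.val ∧ 3 ≤ b.val) ∨ a.val % 3 = b.val % 3)
  symm := by
    refine ⟨?_⟩
    rintro a b ⟨hne, h⟩
    exact ⟨hne.symm, by omega⟩
  loopless := ⟨fun a h => h.1 rfl⟩

/-- Cost `1` on the six triangle edges, cost `2` on the three matching edges. -/
def cPrism : Sym2 (Fin 6) → ℝ :=
  Sym2.lift ⟨fun a b => if a.val % 3 = b.val % 3 then 2 else 1, by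
    intro a b
    simp only []
    by_cases h : a.val % 3 = b.val % 3
    · rw [if_pos h, if_pos h.symm]
    · rw [if_neg h, if_neg fun h2 => h h2.symm]⟩

/-- The laminar family of nine node sets: the six singletons and the three matching
pairs. -/
def Ffam : Fin 9 → Set (Fin 6) :=
  ![{0}, {1}, {2}, {3}, {4}, {5}, {0, 3}, {1, 4}, {2, 5}]

instance : DecidableRel prism.Adj := fun a b =>
  decidable_of_iff (a ≠ b ∧ ((a.val < 3 ∧ b.val < 3) ∨ (3 ≤ a.val ∧ 3 ≤ b.val) ∨ a.val % 3 = b.val % 3)) Iff.rfl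

def E9 : Finset (Sym2 (Fin 6)) :=
  {s(0,1), s(0,2), s(1,2), s(3,4), s(3,5), s(4,5), s(0,3), s(1,4), s(2,5)}

lemma edge_mem_E9 : ∀ e : Sym2 (Fin 6), e ∈ prism.edgeSet → e ∈ E9 := by decide

lemma mem_cutE (S : Set (Fin 6)) (u v : Fin 6) :
    s(u,v) ∈ cutE prism S ↔ prism.Adj u v ∧ ((u ∈ S ∧ v ∉ S) ∨ (v ∈ S ∧ u ∉ S)) := by
  constructor
  · rintro ⟨he, x, y, hxy, hx, hy⟩
    rw [Sym2.eq_iff] at hxy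
    refine ⟨(SimpleGraph.mem_edgeSet prism).mp he, ?_⟩
    rcases hxy with ⟨rfl, rfl⟩ | ⟨rfl, rfl⟩
    · exact Or.inl ⟨hx, hy⟩
    · exact Or.inr ⟨hx, hy⟩
  · rintro ⟨hadj, (⟨hu, hv⟩ | ⟨hv, hu⟩)⟩
    · exact ⟨(SimpleGraph.mem_edgeSet prism).mpr hadj, u, v, rfl, hu, hv⟩
    · exact ⟨(SimpleGraph.mem_edgeSet prism).mpr hadj, v, u, Sym2.eq_swap, hv, hu⟩

def q (S : Set (Fin 6)) (u v : Fin 6) : ℝ :=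
  if (u ∈ S ∧ v ∉ S) ∨ (v ∈ S ∧ u ∉ S) then 1 else 0

lemma term_eq (S : Set (Fin 6)) (u v : Fin 6) (h : prism.Adj u v) :
    (if s(u,v) ∈ cutE prism S then cPrism s(u,v) else 0) = cPrism s(u,v) * q S u v := by
  rw [mem_cutE, q]
  by_cases hc : (u ∈ S ∧ v ∉ S) ∨ (v ∈ S ∧ u ∉ S)
  · simp [h, hc]
  · simp [hc]

lemma cP1 (u v : Fin 6) (h : u.val % 3 ≠ v.val % 3) : cPrism s(u,v) = 1 := by
  simp [cPrism, h]

lemma cP2 (u v : Fin 6) (h : u.val % 3 = v.val % 3) : cPrism s(u,v) = 2 := by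
  simp [cPrism, h]

lemma cost_formula (S : Set (Fin 6)) :
    cost cPrism (cutE prism S) =
      q S 0 1 + q S 0 2 + q S 1 2 + q S 3 4 + q S 3 5 + q S 4 5 +
        2 * q S 0 3 + 2 * q S 1 4 + 2 * q S 2 5 := by
  have h1 : cost cPrism (cutE prism S)
      = ∑ e ∈ E9, (if e ∈ cutE prism S then cPrism e else 0) := by
    rw [cost, Finset.sum_filter]
    exact (Finset.sum_subset (Finset.subset_univ E9)
      (fun e _ he => if_neg (fun hc => he (edge_mem_E9 e hc.1)))).symm
  rw [h1]
  rw [show E9 = {s(0,1), s(0,2), s(1,2), s(3,4), s(3,5), s(4,5), s(0,3), s(1,4), s(2,5)} from rfl]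
  rw [Finset.sum_insert (by decide), Finset.sum_insert (by decide),
    Finset.sum_insert (by decide), Finset.sum_insert (by decide),
    Finset.sum_insert (by decide), Finset.sum_insert (by decide),
    Finset.sum_insert (by decide), Finset.sum_insert (by decide),
    Finset.sum_singleton]
  rw [term_eq S 0 1 (by decide), term_eq S 0 2 (by decide), term_eq S 1 2 (by decide),
    term_eq S 3 4 (by decide), term_eq S 3 5 (by decide), term_eq S 4 5 (by decide),
    term_eq S 0 3 (by decide), term_eq S 1 4 (by decide), term_eq S 2 5 (by decide)]
  rw [cP1 0 1 (by decide), cP1 0 2 (by decide), cP1 1 2 (by decide),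
    cP1 3 4 (by decide), cP1 3 5 (by decide), cP1 4 5 (by decide),
    cP2 0 3 (by decide), cP2 1 4 (by decide), cP2 2 5 (by decide)]
  ring

lemma chi_eq_q (S : Set (Fin 6)) (u v : Fin 6) (h : prism.Adj u v) :
    chi (cutE prism S) s(u,v) = q S u v := by
  rw [chi]
  simp only [mem_cutE, q, h, true_and]

lemma sum9 (f : Fin 9 → ℝ) :
    ∑ i, f i = f 0 + f 1 + f 2 + f 3 + f 4 + f 5 + f 6 + f 7 + f 8 := by
  rw [Fin.sum_univ_succ, Fin.sum_univ_eight]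
  rw [show (Fin.succ (0:Fin 8) : Fin 9) = 1 from rfl, show (Fin.succ (1:Fin 8) : Fin 9) = 2 from rfl,
    show (Fin.succ (2:Fin 8) : Fin 9) = 3 from rfl, show (Fin.succ (3:Fin 8) : Fin 9) = 4 from rfl,
    show (Fin.succ (4:Fin 8) : Fin 9) = 5 from rfl, show (Fin.succ (5:Fin 8) : Fin 9) = 6 from rfl,
    show (Fin.succ (6:Fin 8) : Fin 9) = 7 from rfl, show (Fin.succ (7:Fin 8) : Fin 9) = 8 from rfl]
  ring

theorem stmt15 :
    LinearIndependent ℝ (fun i : Fin 9 => chi (cutE prism (Ffam i))) ∧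
    (∀ i : Fin 9, cost cPrism (cutE prism (Ffam i)) = 4) ∧
    (∀ S : Set (Fin 6), S.Nonempty → S ≠ Set.univ →
      4 ≤ cost cPrism (cutE prism S)) := by
  refine ⟨?_, ?_, ?_⟩
  · rw [Fintype.linearIndependent_iff]
    intro g hg
    have key : ∀ u v : Fin 6, prism.Adj u v →
        ∑ i : Fin 9, g i * q (Ffam i) u v = 0 := by
      intro u v h
      have h2 : ∑ i : Fin 9, g i * q (Ffam i) u v
          = ∑ i : Fin 9, g i * chi (cutE prism (Ffam i)) s(u,v) :=
        Finset.sum_congr rfl (fun i _ => by rw [chi_eq_q _ _ _ h])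
      have h3 := congrFun hg s(u,v)
      simp only [Finset.sum_apply, Pi.smul_apply, smul_eq_mul, Pi.zero_apply] at h3
      exact h2.trans h3
    have e01 := key 0 1 (by decide)
    have e02 := key 0 2 (by decide)
    have e12 := key 1 2 (by decide)
    have e34 := key 3 4 (by decide)
    have e35 := key 3 5 (by decide)
    have e45 := key 4 5 (by decide)
    have e03 := key 0 3 (by decide)
    have e14 := key 1 4 (by decide)
    have e25 := key 2 5 (by decide)
    rw [sum9] at e01 e02 e12 e34 e35 e45 e03 e14 e25
    simp (config := { decide := true }) only [q,
      show Ffam 0 = {0} from rfl, show Ffam 1 = {1} from rfl, show Ffam 2 = {2} from rfl,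
      show Ffam 3 = {3} from rfl, show Ffam 4 = {4} from rfl, show Ffam 5 = {5} from rfl,
      show Ffam 6 = {0, 3} from rfl, show Ffam 7 = {1, 4} from rfl, show Ffam 8 = {2, 5} from rfl,
      Set.mem_insert_iff, Set.mem_singleton_iff, mul_one, mul_zero, add_zero, zero_add,
      if_true, if_false] at e01 e02 e12 e34 e35 e45 e03 e14 e25
    have z0 : g 0 = 0 := by linarith
    have z1 : g 1 = 0 := by linarith
    have z2 : g 2 = 0 := by linarith
    have z3 : g 3 = 0 := by linarith
    have z4 : g 4 = 0 := by linarith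
    have z5 : g 5 = 0 := by linarith
    have z6 : g 6 = 0 := by linarith
    have z7 : g 7 = 0 := by linarith
    have z8 : g 8 = 0 := by linarith
    intro i
    fin_cases i
    exacts [z0, z1, z2, z3, z4, z5, z6, z7, z8]
  · have v0 : cost cPrism (cutE prism ({0} : Set (Fin 6))) = 4 := by
      rw [cost_formula]
      simp (config := { decide := true }) only [q, Set.mem_insert_iff, Set.mem_singleton_iff,
        if_true, if_false]
      norm_num
    have v1 : cost cPrism (cutE prism ({1} : Set (Fin 6))) = 4 := by
      rw [cost_formula]
      simp (config := { decide := true }) only [q, Set.mem_insert_iff, Set.mem_singleton_iff,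
        if_true, if_false]
      norm_num
    have v2 : cost cPrism (cutE prism ({2} : Set (Fin 6))) = 4 := by
      rw [cost_formula]
      simp (config := { decide := true }) only [q, Set.mem_insert_iff, Set.mem_singleton_iff,
        if_true, if_false]
      norm_num
    have v3 : cost cPrism (cutE prism ({3} : Set (Fin 6))) = 4 := by
      rw [cost_formula]
      simp (config := { decide := true }) only [q, Set.mem_insert_iff, Set.mem_singleton_iff,
        if_true, if_false]
      norm_num
    have v4 : cost cPrism (cutE prism ({4} : Set (Fin 6))) = 4 := by
      rw [cost_formula]
      simp (config := { decide := true }) only [q, Set.mem_insert_iff, Set.mem_singleton_iff,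
        if_true, if_false]
      norm_num
    have v5 : cost cPrism (cutE prism ({5} : Set (Fin 6))) = 4 := by
      rw [cost_formula]
      simp (config := { decide := true }) only [q, Set.mem_insert_iff, Set.mem_singleton_iff,
        if_true, if_false]
      norm_num
    have v6 : cost cPrism (cutE prism ({0, 3} : Set (Fin 6))) = 4 := by
      rw [cost_formula]
      simp (config := { decide := true }) only [q, Set.mem_insert_iff, Set.mem_singleton_iff,
        if_true, if_false]
      norm_num
    have v7 : cost cPrism (cutE prism ({1, 4} : Set (Fin 6))) = 4 := by
      rw [cost_formula]
      simp (config := { decide := true }) only [q, Set.mem_insert_iff, Set.mem_singleton_iff,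
        if_true, if_false]
      norm_num
    have v8 : cost cPrism (cutE prism ({2, 5} : Set (Fin 6))) = 4 := by
      rw [cost_formula]
      simp (config := { decide := true }) only [q, Set.mem_insert_iff, Set.mem_singleton_iff,
        if_true, if_false]
      norm_num
    intro i
    fin_cases i
    exacts [v0, v1, v2, v3, v4, v5, v6, v7, v8]
  · intro S hne hneq
    by_cases h0 : (0:Fin 6) ∈ S <;> by_cases h1 : (1:Fin 6) ∈ S <;>
      by_cases h2 : (2:Fin 6) ∈ S <;> by_cases h3 : (3:Fin 6) ∈ S <;>
      by_cases h4 : (4:Fin 6) ∈ S <;> by_cases h5 : (5:Fin 6) ∈ S <;>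
    first
      | (exact absurd (Set.eq_univ_iff_forall.mpr fun x => by
          rcases x with ⟨xv, hxlt⟩
          interval_cases xv
          exacts [h0, h1, h2, h3, h4, h5]) hneq)
      | (obtain ⟨x, hx⟩ := hne
         rcases x with ⟨xv, hxlt⟩
         interval_cases xv
         exacts [absurd hx h0, absurd hx h1, absurd hx h2, absurd hx h3, absurd hx h4,
           absurd hx h5])
      | (rw [cost_formula]; norm_num [q, h0, h1, h2, h3, h4, h5])
end
end
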